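/- Let β > 3, c > 0, M₁, M₂ > 0, and let m ≥ 0 be an integer. Suppose f₁, f₂ : [0, ∞) × (ℤ³ \ {0}) → ℂ³ satisfy |f_i(s, k)| ≤ M_i |k|^{−β} exp(−c√(m+1) |k|) for i = 1, 2, all s ∈ [0, 1], and all k ≠ 0. Then there exists a constant D > 0 depending only on β such that for all t ∈ [0, 1] and all k ∈ ℤ³ \ {0}: |B(f₁, f₂)(t, k)| ≤ D M₁ M₂ |k|^{−β} exp(−c√(m+1) |k|). -/

import Mathlib

noncomputable section

open Real MeasureTheory

abbrev Z3 : Type := Fin 3 → ℤ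
abbrev C3 : Type := EuclideanSpace ℂ (Fin 3)

/-- The integer vector `k` regarded as a vector in `ℝ³`. -/
def toR3 (k : Z3) : EuclideanSpace ℝ (Fin 3) := WithLp.toLp 2 (fun i => (k i : ℝ))

/-- The Euclidean norm of `k ∈ ℤ³`. -/
def znorm (k : Z3) : ℝ := ‖toR3 k‖

/-- The integer vector `k` regarded as a vector in `ℂ³`. -/
def toC3 (k : Z3) : C3 := WithLp.toLp 2 (fun i => (k i : ℂ))

/-- The bilinear dot product `⟨a, b⟩ = Σᵢ aᵢbᵢ` on `ℂ³` (no conjugation). -/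
def cdot (a b : C3) : ℂ := ∑ i, a i * b i

/-- The Leray projector `P_k x = x − (⟨k, x⟩/|k|²) k`. -/
def leray (k : Z3) (x : C3) : C3 := x - ((cdot (toC3 k) x) / ((znorm k : ℂ) ^ 2)) • toC3 k

/-- The Navier–Stokes bilinear operator
`B(f,g)(t,k) = 2πi ∫₀ᵗ e^{−(t−s)|k|²} Σ_{l ≠ 0, l ≠ k} ⟨k, f(s,k−l)⟩ P_k g(s,l) ds`. -/
def nsB (f g : ℝ → Z3 → C3) (t : ℝ) (k : Z3) : C3 :=
  (2 * (π : ℂ) * Complex.I) • ∫ s in (0:ℝ)..t,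
    Real.exp (-(t - s) * znorm k ^ 2) •
      ∑' l : Z3, if l ≠ 0 ∧ l ≠ k then cdot (toC3 k) (f s (k - l)) • leray k (g s l)
        else (0 : C3)

/-! The bound is a discrete Young inequality for the convolution in `B`.  Since
`|k| ≤ |k - l| + |l|`, one of `|k - l|`, `|l|` is at least `|k|/2`, hence
`|k - l|^{-β} |l|^{-β} ≤ 2^β |k|^{-β} (|k - l|^{-β} + |l|^{-β})`, while the exponential
factors multiply to at most `exp(-c√(m+1)|k|)`.  Summing over `l` costs twice
`∑_{l ≠ 0} |l|^{-β}`, finite because `β > 3`.  The factor `|k|` coming from `⟨k, ·⟩` is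
absorbed by the time integral `∫₀ᵗ e^{-(t-s)|k|²} ds ≤ |k|^{-2}`. -/

lemma toR3_sub (k l : Z3) : toR3 (k - l) = toR3 k - toR3 l := by
  ext i; simp [toR3]

lemma znorm_le_znorm_sub_add (k l : Z3) : znorm k ≤ znorm (k - l) + znorm l := by
  simpa only [znorm, toR3_sub] using norm_le_norm_sub_add (toR3 k) (toR3 l)

lemma znorm_nonneg (k : Z3) : 0 ≤ znorm k := norm_nonneg _

lemma one_le_znorm {k : Z3} (hk : k ≠ 0) : 1 ≤ znorm k := by
  obtain ⟨i, hi⟩ : ∃ i, k i ≠ 0 := Function.ne_iff.mp hk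
  calc (1 : ℝ) ≤ |(k i : ℝ)| := by exact_mod_cast Int.one_le_abs hi
    _ = ‖toR3 k i‖ := by simp [toR3]
    _ ≤ znorm k := PiLp.norm_apply_le _ i

lemma znorm_pos {k : Z3} (hk : k ≠ 0) : 0 < znorm k :=
  one_pos.trans_le (one_le_znorm hk)

lemma norm_toC3 (k : Z3) : ‖toC3 k‖ = znorm k := by
  simp [znorm, toC3, toR3, EuclideanSpace.norm_eq, Complex.norm_intCast]

lemma cdot_toC3_eq_inner (k : Z3) (x : C3) : cdot (toC3 k) x = inner ℂ (toC3 k) x := by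
  simp [cdot, PiLp.inner_apply, toC3, mul_comm]

lemma norm_cdot_toC3_le (k : Z3) (x : C3) : ‖cdot (toC3 k) x‖ ≤ znorm k * ‖x‖ := by
  simpa only [cdot_toC3_eq_inner, norm_toC3] using norm_inner_le_norm (𝕜 := ℂ) (toC3 k) x

lemma norm_leray_le {k : Z3} (hk : k ≠ 0) (x : C3) : ‖leray k x‖ ≤ 2 * ‖x‖ := by
  have hk' := znorm_pos hk
  have hproj : ‖(cdot (toC3 k) x / (znorm k : ℂ) ^ 2) • toC3 k‖ ≤ ‖x‖ := by
    rw [norm_smul, norm_div, norm_pow, Complex.norm_real, Real.norm_of_nonneg hk'.le,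
      norm_toC3, div_mul_eq_mul_div, div_le_iff₀ (by positivity)]
    nlinarith [norm_cdot_toC3_le k x]
  calc ‖leray k x‖ ≤ ‖x‖ + ‖(cdot (toC3 k) x / (znorm k : ℂ) ^ 2) • toC3 k‖ := norm_sub_le _ _
    _ ≤ 2 * ‖x‖ := by linarith

-- Lean's `0 ^ (-β) = 0` makes this the lattice sum over `ℤ³ \ {0}`.
lemma summable_znorm_rpow {β : ℝ} (hβ : 3 < β) : Summable fun l : Z3 => znorm l ^ (-β) := by
  let b := PiLp.basisFun 2 ℝ (Fin 3)
  let L := Submodule.span ℤ (Set.range b)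
  have hrank : Module.finrank ℤ L = 3 := by
    rw [ZLattice.rank ℝ L, finrank_euclideanSpace_fin]
  have hL := ZLattice.summable_norm_rpow L (-β) (by rw [hrank]; push_cast; linarith)
  let e := (b.restrictScalars ℤ).equivFun
  refine (e.symm.toEquiv.summable_iff.mpr hL).congr fun l => ?_
  show ‖((e.symm l : L) : EuclideanSpace ℝ (Fin 3))‖ ^ (-β) = ‖toR3 l‖ ^ (-β)
  congr 2
  ext i
  simp [e, b, Module.Basis.equivFun_symm_apply, toR3, Module.Basis.restrictScalars_apply,
    Pi.single_apply]

lemma rpow_neg_mul_rpow_neg_le {x y z β : ℝ} (hx : 0 ≤ x) (hy : 0 ≤ y) (hz : 0 < z)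
    (hxyz : z ≤ x + y) (hβ : 0 ≤ β) :
    x ^ (-β) * y ^ (-β) ≤ 2 ^ β * z ^ (-β) * (x ^ (-β) + y ^ (-β)) := by
  have half_le : ∀ u, z / 2 ≤ u → u ^ (-β) ≤ 2 ^ β * z ^ (-β) := fun u hu => by
    calc u ^ (-β) ≤ (z / 2) ^ (-β) := Real.rpow_le_rpow_of_nonpos (by positivity) hu (by linarith)
      _ = 2 ^ β * z ^ (-β) := by
        rw [Real.div_rpow hz.le zero_le_two, Real.rpow_neg zero_le_two, div_inv_eq_mul, mul_comm]
  have hx' := Real.rpow_nonneg hx (-β)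
  have hy' := Real.rpow_nonneg hy (-β)
  have hC : 0 ≤ 2 ^ β * z ^ (-β) := by positivity
  rcases le_total y x with hyx | hxy
  · nlinarith [half_le x (by linarith), mul_nonneg hC hx']
  · nlinarith [half_le y (by linarith), mul_nonneg hC hy']

/-- The weight defining the norm of `F_m(c)`, with `γ = c√m`. -/
def decayWeight (β γ : ℝ) (k : Z3) : ℝ := znorm k ^ (-β) * Real.exp (-γ * znorm k)

lemma decayWeight_nonneg (β γ : ℝ) (k : Z3) : 0 ≤ decayWeight β γ k :=
  mul_nonneg (Real.rpow_nonneg (norm_nonneg _) _) (Real.exp_nonneg _)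

lemma decayWeight_sub_mul_le {β γ : ℝ} (hβ : 0 ≤ β) (hγ : 0 ≤ γ) {k : Z3} (hk : k ≠ 0)
    (l : Z3) :
    decayWeight β γ (k - l) * decayWeight β γ l ≤
      2 ^ β * decayWeight β γ k * (znorm (k - l) ^ (-β) + znorm l ^ (-β)) := by
  have htri := znorm_le_znorm_sub_add k l
  have hpow := rpow_neg_mul_rpow_neg_le (znorm_nonneg (k - l)) (znorm_nonneg l)
    (znorm_pos hk) htri hβ
  have hexp : Real.exp (-γ * znorm (k - l)) * Real.exp (-γ * znorm l) ≤
      Real.exp (-γ * znorm k) := by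
    rw [← Real.exp_add, Real.exp_le_exp]
    nlinarith
  calc decayWeight β γ (k - l) * decayWeight β γ l
      = (znorm (k - l) ^ (-β) * znorm l ^ (-β)) *
          (Real.exp (-γ * znorm (k - l)) * Real.exp (-γ * znorm l)) := by
        rw [decayWeight, decayWeight]; ring
    _ ≤ (2 ^ β * znorm k ^ (-β) * (znorm (k - l) ^ (-β) + znorm l ^ (-β))) *
          Real.exp (-γ * znorm k) :=
        mul_le_mul hpow hexp (by positivity)
          ((mul_nonneg (Real.rpow_nonneg (znorm_nonneg _) _)
            (Real.rpow_nonneg (znorm_nonneg _) _)).trans hpow)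
    _ = 2 ^ β * decayWeight β γ k * (znorm (k - l) ^ (-β) + znorm l ^ (-β)) := by
        rw [decayWeight]; ring

lemma norm_cdot_smul_leray_le {β γ M₁ M₂ : ℝ} (hβ : 0 ≤ β) (hγ : 0 ≤ γ) (hM₁ : 0 ≤ M₁)
    (hM₂ : 0 ≤ M₂) {k : Z3} (hk : k ≠ 0) {l : Z3} {x y : C3}
    (hx : ‖x‖ ≤ M₁ * decayWeight β γ (k - l)) (hy : ‖y‖ ≤ M₂ * decayWeight β γ l) :
    ‖cdot (toC3 k) x • leray k y‖ ≤
      2 * 2 ^ β * znorm k * M₁ * M₂ * decayWeight β γ k *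
        (znorm (k - l) ^ (-β) + znorm l ^ (-β)) := by
  have hcdot : ‖cdot (toC3 k) x‖ ≤ znorm k * (M₁ * decayWeight β γ (k - l)) :=
    (norm_cdot_toC3_le k x).trans (by gcongr; exact norm_nonneg _)
  have hleray : ‖leray k y‖ ≤ 2 * (M₂ * decayWeight β γ l) :=
    (norm_leray_le hk y).trans (by gcongr)
  calc ‖cdot (toC3 k) x • leray k y‖
      ≤ znorm k * (M₁ * decayWeight β γ (k - l)) * (2 * (M₂ * decayWeight β γ l)) := by
        rw [norm_smul]
        exact mul_le_mul hcdot hleray (norm_nonneg _) ((norm_nonneg _).trans hcdot)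
    _ = 2 * znorm k * M₁ * M₂ * (decayWeight β γ (k - l) * decayWeight β γ l) := by ring
    _ ≤ 2 * znorm k * M₁ * M₂ *
          (2 ^ β * decayWeight β γ k * (znorm (k - l) ^ (-β) + znorm l ^ (-β))) := by
        have := znorm_nonneg k
        exact mul_le_mul_of_nonneg_left (decayWeight_sub_mul_le hβ hγ hk l) (by positivity)
    _ = _ := by ring

lemma norm_tsum_le_of_norm_le_sub_add {G E : Type*} [AddCommGroup G]
    [SeminormedAddCommGroup E] {h : G → ℝ} (hh : Summable h) {g : G → E} {C : ℝ} (k : G)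
    (hg : ∀ l, ‖g l‖ ≤ C * (h (k - l) + h l)) :
    ‖∑' l, g l‖ ≤ 2 * C * ∑' l, h l := by
  have hh' : Summable fun l => h (k - l) := (Equiv.subLeft k).summable_iff.mpr hh
  have hbound : Summable fun l => C * (h (k - l) + h l) := (hh'.add hh).mul_left C
  calc ‖∑' l, g l‖ ≤ ∑' l, ‖g l‖ :=
        norm_tsum_le_tsum_norm (hbound.of_nonneg_of_le (fun _ => norm_nonneg _) hg)
    _ ≤ ∑' l, C * (h (k - l) + h l) :=
        Summable.tsum_le_tsum hg (hbound.of_nonneg_of_le (fun _ => norm_nonneg _) hg) hbound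
    _ = 2 * C * ∑' l, h l := by
        have hshift : ∑' l, h (k - l) = ∑' l, h l := (Equiv.subLeft k).tsum_eq h
        rw [tsum_mul_left, hh'.tsum_add hh, hshift]; ring

lemma integral_exp_neg_sub_mul {a : ℝ} (ha : a ≠ 0) (t : ℝ) :
    ∫ s in (0 : ℝ)..t, Real.exp (-(t - s) * a) = (1 - Real.exp (-(t * a))) / a := by
  have h := intervalIntegral.integral_comp_mul_sub (a := 0) (b := t) Real.exp ha (a * t)
  simp only [integral_exp, sub_self, mul_zero, zero_sub, Real.exp_zero, smul_eq_mul] at h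
  convert h using 1
  · congr 1; ext s; ring_nf
  · rw [mul_comm t a]; field_simp

lemma norm_integral_exp_smul_le {E : Type*} [NormedAddCommGroup E] [NormedSpace ℝ E]
    {g : ℝ → E} {a t K : ℝ} (ha : 0 < a) (ht : 0 ≤ t) (hK : 0 ≤ K)
    (hg : ∀ s ∈ Set.Ioc 0 t, ‖g s‖ ≤ K) :
    ‖∫ s in (0 : ℝ)..t, Real.exp (-(t - s) * a) • g s‖ ≤ K / a := by
  have hbound : ∀ s ∈ Set.Ioc 0 t, ‖Real.exp (-(t - s) * a) • g s‖ ≤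
      Real.exp (-(t - s) * a) * K := fun s hs => by
    rw [norm_smul, Real.norm_of_nonneg (Real.exp_nonneg _)]
    exact mul_le_mul_of_nonneg_left (hg s hs) (Real.exp_nonneg _)
  calc ‖∫ s in (0 : ℝ)..t, Real.exp (-(t - s) * a) • g s‖
      ≤ ∫ s in (0 : ℝ)..t, Real.exp (-(t - s) * a) * K :=
        intervalIntegral.norm_integral_le_of_norm_le ht (.of_forall hbound)
          (by apply Continuous.intervalIntegrable; fun_prop)
    _ = (1 - Real.exp (-(t * a))) / a * K := by
        rw [intervalIntegral.integral_mul_const, integral_exp_neg_sub_mul ha.ne']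
    _ ≤ 1 / a * K := by
        gcongr
        linarith [Real.exp_pos (-(t * a))]
    _ = K / a := by ring

theorem norm_nsB_le {β γ M₁ M₂ : ℝ} (hβ : 3 < β) (hγ : 0 ≤ γ) (hM₁ : 0 ≤ M₁) (hM₂ : 0 ≤ M₂)
    {f₁ f₂ : ℝ → Z3 → C3}
    (hf₁ : ∀ s ∈ Set.Icc (0 : ℝ) 1, ∀ k : Z3, k ≠ 0 → ‖f₁ s k‖ ≤ M₁ * decayWeight β γ k)
    (hf₂ : ∀ s ∈ Set.Icc (0 : ℝ) 1, ∀ k : Z3, k ≠ 0 → ‖f₂ s k‖ ≤ M₂ * decayWeight β γ k)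
    {t : ℝ} (ht : t ∈ Set.Icc (0 : ℝ) 1) {k : Z3} (hk : k ≠ 0) :
    ‖nsB f₁ f₂ t k‖ ≤
      8 * π * 2 ^ β * (∑' l : Z3, znorm l ^ (-β)) * M₁ * M₂ * decayWeight β γ k := by
  set A := ∑' l : Z3, znorm l ^ (-β)
  set C := 2 * 2 ^ β * znorm k * M₁ * M₂ * decayWeight β γ k
  have hk₀ := znorm_pos hk
  have hA : 0 ≤ A := tsum_nonneg fun l => Real.rpow_nonneg (znorm_nonneg l) _
  have hC : 0 ≤ C := by have := decayWeight_nonneg β γ k; positivity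
  have hsum : ∀ s ∈ Set.Ioc 0 t, ‖∑' l : Z3, if l ≠ 0 ∧ l ≠ k then
      cdot (toC3 k) (f₁ s (k - l)) • leray k (f₂ s l) else (0 : C3)‖ ≤ 2 * C * A := by
    intro s hs
    have hs' : s ∈ Set.Icc (0 : ℝ) 1 := ⟨hs.1.le, hs.2.trans ht.2⟩
    refine norm_tsum_le_of_norm_le_sub_add (summable_znorm_rpow hβ) k fun l => ?_
    split_ifs with hl
    · exact norm_cdot_smul_leray_le (by linarith) hγ hM₁ hM₂ hk
        (hf₁ s hs' _ (sub_ne_zero.mpr (Ne.symm hl.2))) (hf₂ s hs' l hl.1)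
    · have := Real.rpow_nonneg (znorm_nonneg (k - l)) (-β)
      have := Real.rpow_nonneg (znorm_nonneg l) (-β)
      rw [norm_zero]; positivity
  have hint := norm_integral_exp_smul_le (a := znorm k ^ 2) (by positivity) ht.1
    (by positivity) hsum
  have hk₁ : 1 / znorm k ≤ 1 := by rw [div_le_one hk₀]; exact one_le_znorm hk
  calc ‖nsB f₁ f₂ t k‖ ≤ 2 * π * (2 * C * A / znorm k ^ 2) := by
        rw [nsB, norm_smul]
        have h2πi : ‖2 * (π : ℂ) * Complex.I‖ = 2 * π := by
          simp [abs_of_nonneg Real.pi_pos.le]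
        rw [h2πi]
        gcongr
    _ = 8 * π * 2 ^ β * A * M₁ * M₂ * decayWeight β γ k * (1 / znorm k) := by
        field_simp; ring
    _ ≤ 8 * π * 2 ^ β * A * M₁ * M₂ * decayWeight β γ k * 1 := by
        have := decayWeight_nonneg β γ k
        gcongr
    _ = 8 * π * 2 ^ β * A * M₁ * M₂ * decayWeight β γ k := mul_one _

/-- Let `β > 3`, `c > 0`.  There is a constant `D > 0` depending only on `β`
such that: whenever `M₁, M₂ > 0`, `m ≥ 0` is an integer and `f₁, f₂` satisfy
`|fᵢ(s,k)| ≤ Mᵢ |k|^{−β} exp(−c√(m+1)|k|)` for `i = 1, 2`, `s ∈ [0,1]` and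
`k ≠ 0`, then for all `t ∈ [0, 1]` and `k ≠ 0`,
`|B(f₁,f₂)(t,k)| ≤ D M₁ M₂ |k|^{−β} exp(−c√(m+1)|k|)`.  (This says that under
`B` the spaces `F_{m+1}(c)` behave like a normed algebra.) -/
theorem statement12 (β : ℝ) (hβ : 3 < β) (c : ℝ) (hc : 0 < c) :
    ∃ D : ℝ, 0 < D ∧
      ∀ (M₁ M₂ : ℝ), 0 < M₁ → 0 < M₂ → ∀ (m : ℕ) (f₁ f₂ : ℝ → Z3 → C3),
        (∀ s ∈ Set.Icc (0 : ℝ) 1, ∀ k : Z3, k ≠ 0 →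
          ‖f₁ s k‖ ≤ M₁ * znorm k ^ (-β)
            * Real.exp (-c * Real.sqrt ((m : ℝ) + 1) * znorm k)) →
        (∀ s ∈ Set.Icc (0 : ℝ) 1, ∀ k : Z3, k ≠ 0 →
          ‖f₂ s k‖ ≤ M₂ * znorm k ^ (-β)
            * Real.exp (-c * Real.sqrt ((m : ℝ) + 1) * znorm k)) →
        ∀ t ∈ Set.Icc (0 : ℝ) 1, ∀ k : Z3, k ≠ 0 →
          ‖nsB f₁ f₂ t k‖ ≤ D * M₁ * M₂ * znorm k ^ (-β)
            * Real.exp (-c * Real.sqrt ((m : ℝ) + 1) * znorm k) := by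
  have hone : (fun _ => 1 : Z3) ≠ 0 := fun h => one_ne_zero (congrFun h 0)
  have hA : 0 < ∑' l : Z3, znorm l ^ (-β) :=
    (summable_znorm_rpow hβ).tsum_pos (fun l => Real.rpow_nonneg (znorm_nonneg l) _) _
      (Real.rpow_pos_of_pos (znorm_pos hone) _)
  refine ⟨8 * π * 2 ^ β * ∑' l : Z3, znorm l ^ (-β), by positivity, ?_⟩
  intro M₁ M₂ hM₁ hM₂ m f₁ f₂ hf₁ hf₂ t ht k hk
  have hweight : ∀ (M : ℝ) (j : Z3),
      M * znorm j ^ (-β) * Real.exp (-c * Real.sqrt ((m : ℝ) + 1) * znorm j) =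
        M * decayWeight β (c * Real.sqrt ((m : ℝ) + 1)) j := fun M j => by
    rw [decayWeight, neg_mul, mul_assoc]
  simp only [hweight] at hf₁ hf₂ ⊢
  exact norm_nsB_le hβ (by positivity) hM₁.le hM₂.le hf₁ hf₂ ht hk
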